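/- If G is a finite simple graph with at least one edge and α∘(G) = χ(G), then χ_c(G) = χ(G). -/

import Mathlib

/-!
A proper `k`-colouring is a `(k,1)`-colouring, so `χ_c(G) ≤ χ(G)`. Conversely, given a
`(p,q)`-colouring `c`, order the vertices circularly by increasing colour. Some cycle with at
least `α∘(G)` vertices is monotonic for this ordering; along it the colour rises by at least `q`
at every edge but the closing one, and the closing edge allows a total rise of at most `p - q`.
Hence `α∘(G) q ≤ p`, i.e. `α∘(G) ≤ χ_c(G)`, and `α∘(G) = χ(G)` closes the gap.
-/

open SimpleGraph

/-- A list of vertices forms a cycle of `G` (single edges count as cycles of length 2):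
at least two vertices, no repetitions, and consecutive vertices (cyclically) adjacent. -/
def IsCycleList {V : Type*} (G : SimpleGraph V) (l : List V) : Prop :=
  2 ≤ l.length ∧ l.Nodup ∧
    ∀ i : Fin l.length,
      G.Adj (l.get i) (l.get ⟨((i : ℕ) + 1) % l.length, Nat.mod_lt _ i.pos⟩)

/-- A cycle of `G` is monotonic for a circular ordering `σ` of the vertices if, after a
suitable rotation, its vertices appear in increasing order of position, i.e. the vertices
`u_1, …, u_k, u_1` of the cycle appear in this cyclic order in `σ`. -/
def IsMonotonicCycle {V : Type*} [Fintype V] (G : SimpleGraph V)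
    (σ : V ≃ Fin (Fintype.card V)) (l : List V) : Prop :=
  IsCycleList G l ∧ ∃ r : ℕ, ((l.rotate r).map fun x => (σ x : ℕ)).Chain' (· < ·)

/-- The circular altitude of `G`: the largest `k` such that every circular ordering of
the vertices of `G` contains a monotonic cycle with at least `k` vertices. -/
noncomputable def circAltitude {V : Type*} [Fintype V] (G : SimpleGraph V) : ℕ :=
  sSup {k | ∀ σ : V ≃ Fin (Fintype.card V), ∃ l : List V,
    IsMonotonicCycle G σ l ∧ k ≤ l.length}

/-- A `(p,q)`-colouring of `G`: a map `c : V(G) → {1, …, p}` (encoded as `Fin p`) such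
that `q ≤ |c u − c v| ≤ p − q` for every edge `uv` of `G`. -/
def IsPQColoring {V : Type*} (G : SimpleGraph V) (p q : ℕ) (c : V → Fin p) : Prop :=
  ∀ a b : V, G.Adj a b →
    (q : ℤ) ≤ |((c a : ℕ) : ℤ) - ((c b : ℕ) : ℤ)| ∧
      |((c a : ℕ) : ℤ) - ((c b : ℕ) : ℤ)| ≤ (p : ℤ) - (q : ℤ)

/-- The circular chromatic number `χ_c(G)`: the infimum of `p / q` over all pairs of
positive integers `(p, q)` for which `G` admits a `(p,q)`-colouring. -/
noncomputable def circChromNum {V : Type*} [Fintype V] (G : SimpleGraph V) : ℝ :=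
  sInf {x : ℝ | ∃ p q : ℕ, 0 < p ∧ 0 < q ∧ x = (p : ℝ) / (q : ℝ) ∧
    ∃ c : V → Fin p, IsPQColoring G p q c}


theorem List.IsChain.head_add_nsmul_le_getLast {α : Type*} [AddMonoid α] [Preorder α]
    [AddRightMono α] {q : α} :
    ∀ {l : List α} (hl : l ≠ []), l.IsChain (fun a b => a + q ≤ b) →
      l.head hl + (l.length - 1) • q ≤ l.getLast hl
  | [a], _, _ => by simp
  | a :: b :: l, _, h => by
    rw [List.isChain_cons_cons] at h
    have ih := head_add_nsmul_le_getLast (l := b :: l) (List.cons_ne_nil _ _) h.2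
    simp only [List.head_cons, List.length_cons, Nat.add_sub_cancel, List.getLast_cons_cons,
      succ_nsmul', ← add_assoc] at ih ⊢
    exact (add_le_add_left h.1 _).trans ih

theorem exists_equiv_fin_monotone_comp_symm {V α : Type*} [Fintype V] [LinearOrder α]
    (f : V → α) : ∃ σ : V ≃ Fin (Fintype.card V), Monotone (f ∘ σ.symm) :=
  let e := Fintype.equivFin V
  ⟨e.trans (Tuple.sort (f ∘ e.symm)).symm, Tuple.monotone_sort (f ∘ e.symm)⟩

namespace IsCycleList

variable {V : Type*} {G : SimpleGraph V} {l : List V}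

theorem ne_nil (hl : IsCycleList G l) : l ≠ [] :=
  List.ne_nil_of_length_pos (by have := hl.1; omega)

theorem rotate (hl : IsCycleList G l) (r : ℕ) : IsCycleList G (l.rotate r) := by
  obtain ⟨h2, hnd, hadj⟩ := hl
  have hlen : (l.rotate r).length = l.length := l.length_rotate r
  refine ⟨by omega, List.nodup_rotate.2 hnd, fun i => ?_⟩
  rw [List.get_rotate, List.get_rotate]
  convert hadj ⟨((i : ℕ) + r) % l.length, Nat.mod_lt _ (by omega)⟩ using 3
  simp only [hlen, Nat.mod_add_mod]
  congr 1
  omega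

theorem isChain_adj (hl : IsCycleList G l) : l.IsChain G.Adj :=
  List.isChain_iff_getElem.2 fun i hi => by
    simpa [Nat.mod_eq_of_lt hi] using hl.2.2 ⟨i, by omega⟩

theorem adj_getLast_head (hl : IsCycleList G l) :
    G.Adj (l.getLast hl.ne_nil) (l.head hl.ne_nil) := by
  have hpos : 0 < l.length := List.length_pos_of_ne_nil hl.ne_nil
  have := hl.2.2 ⟨l.length - 1, by omega⟩
  simpa [List.getLast_eq_getElem, List.head_eq_getElem, Nat.sub_add_cancel hpos] using this

end IsCycleList

theorem isMonotonicCycle_pair {V : Type*} [Fintype V] {G : SimpleGraph V}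
    {σ : V ≃ Fin (Fintype.card V)} {a b : V} (hab : G.Adj a b) (hσ : σ a < σ b) :
    IsMonotonicCycle G σ [a, b] := by
  refine ⟨⟨le_rfl, by simp [hab.ne], fun i => ?_⟩, 0, List.isChain_pair.2 hσ⟩
  fin_cases i <;> simp [hab, hab.symm]

theorem exists_isMonotonicCycle_circAltitude_le_length {V : Type*} [Fintype V]
    {G : SimpleGraph V} {a b : V} (hab : G.Adj a b) (σ : V ≃ Fin (Fintype.card V)) :
    ∃ l : List V, IsMonotonicCycle G σ l ∧ circAltitude G ≤ l.length := by
  refine Nat.sSup_mem (s := {k | ∀ σ : V ≃ Fin (Fintype.card V), ∃ l : List V,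
    IsMonotonicCycle G σ l ∧ k ≤ l.length}) ⟨0, fun σ => ?_⟩ ⟨Fintype.card V, ?_⟩ σ
  · rcases (σ.injective.ne hab.ne).lt_or_gt with h | h
    · exact ⟨_, isMonotonicCycle_pair hab h, Nat.zero_le _⟩
    · exact ⟨_, isMonotonicCycle_pair hab.symm h, Nat.zero_le _⟩
  · intro k hk
    obtain ⟨l, ⟨⟨-, hnd, -⟩, -⟩, hkl⟩ := hk σ
    exact hkl.trans hnd.length_le_card

theorem SimpleGraph.Coloring.isPQColoring {V : Type*} {G : SimpleGraph V} {k : ℕ}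
    (C : G.Coloring (Fin k)) : IsPQColoring G k 1 C := by
  intro u v huv
  have hne : (C u : ℕ) ≠ C v := Fin.val_ne_of_ne (C.valid huv)
  have hu := (C u).isLt
  have hv := (C v).isLt
  constructor
  · exact Int.one_le_abs (sub_ne_zero.2 (by exact_mod_cast hne))
  · rw [abs_sub_le_iff]
    omega

namespace IsPQColoring

variable {V : Type*} {G : SimpleGraph V} {p q : ℕ} {c : V → Fin p}

theorem le_sub_of_adj (hc : IsPQColoring G p q c) {a b : V} (hab : G.Adj a b)
    (hle : c a ≤ c b) :
    (q : ℤ) ≤ (c b : ℕ) - ((c a : ℕ) : ℤ) ∧ ((c b : ℕ) : ℤ) - (c a : ℕ) ≤ p - q := by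
  have hle' : ((c a : ℕ) : ℤ) ≤ (c b : ℕ) := by exact_mod_cast hle
  rw [← abs_of_nonneg (sub_nonneg.2 hle'), abs_sub_comm]
  exact hc a b hab

theorem length_mul_le (hc : IsPQColoring G p q c) {l : List V} (hl : IsCycleList G l)
    (hmono : l.IsChain fun x y => c x ≤ c y) : l.length * q ≤ p := by
  have hrise : (l.map fun v => ((c v : ℕ) : ℤ)).IsChain fun a b => a + (q : ℤ) ≤ b :=
    List.isChain_map _ |>.2 <| List.isChain_iff_getElem.2 fun i hi => by
      linarith [(hc.le_sub_of_adj (hl.isChain_adj.getElem i hi) (hmono.getElem i hi)).1]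
  have htotal := hrise.head_add_nsmul_le_getLast (List.map_eq_nil_iff.not.2 hl.ne_nil)
  have hpos : 1 ≤ l.length := List.length_pos_of_ne_nil hl.ne_nil
  simp only [List.head_map, List.getLast_map, List.length_map, nsmul_eq_mul] at htotal
  push_cast [Nat.cast_sub hpos] at htotal
  have hq : (0 : ℤ) ≤ q := Int.natCast_nonneg q
  have hclose := (hc.le_sub_of_adj hl.adj_getLast_head.symm
    (Fin.le_iff_val_le_val.2 (by zify; nlinarith))).2
  exact_mod_cast (by nlinarith : (l.length : ℤ) * q ≤ p)

theorem circAltitude_mul_le [Fintype V] (hc : IsPQColoring G p q c) {a b : V}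
    (hab : G.Adj a b) : circAltitude G * q ≤ p := by
  obtain ⟨σ, hσ⟩ := exists_equiv_fin_monotone_comp_symm c
  obtain ⟨l, ⟨hl, r, hchain⟩, hlen⟩ := exists_isMonotonicCycle_circAltitude_le_length hab σ
  have hmono : (l.rotate r).IsChain fun x y => c x ≤ c y :=
    (List.isChain_map _).1 hchain |>.imp fun x y hxy => by
      simpa using hσ (show σ x ≤ σ y from hxy.le)
  calc circAltitude G * q ≤ (l.rotate r).length * q := by
        rw [List.length_rotate]; exact Nat.mul_le_mul_right q hlen
    _ ≤ p := hc.length_mul_le (hl.rotate r) hmono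

end IsPQColoring

section CircChromNum

variable {V : Type*} [Fintype V] {G : SimpleGraph V}

theorem circChromNum_le_div {p q : ℕ} (hp : 0 < p) (hq : 0 < q) {c : V → Fin p}
    (hc : IsPQColoring G p q c) : circChromNum G ≤ p / q :=
  csInf_le ⟨0, by rintro x ⟨p, q, -, -, rfl, -⟩; positivity⟩ ⟨p, q, hp, hq, rfl, c, hc⟩

theorem circChromNum_le_chromaticNumber [Nonempty V] :
    circChromNum G ≤ (G.chromaticNumber.toNat : ℝ) := by
  obtain ⟨C⟩ := G.colorable_chromaticNumber_of_fintype
  simpa using circChromNum_le_div (C (Classical.arbitrary V)).pos one_pos C.isPQColoring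

theorem circAltitude_le_circChromNum {a b : V} (hab : G.Adj a b) :
    (circAltitude G : ℝ) ≤ circChromNum G := by
  obtain ⟨C⟩ := G.colorable_chromaticNumber_of_fintype
  refine le_csInf ⟨_, _, 1, (C a).pos, one_pos, rfl, C, C.isPQColoring⟩ ?_
  rintro x ⟨p, q, -, hq, rfl, c, hc⟩
  rw [le_div_iff₀ (by exact_mod_cast hq)]
  exact_mod_cast hc.circAltitude_mul_le hab

end CircChromNum

/-- If `G` is a finite simple graph with at least one edge and `α∘(G) = χ(G)`, then
`χ_c(G) = χ(G)`. -/
theorem circChromNum_eq_chromaticNumber {V : Type*} [Fintype V]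
    (G : SimpleGraph V) (hedge : ∃ a b : V, G.Adj a b)
    (h : (circAltitude G : ℕ∞) = G.chromaticNumber) :
    circChromNum G = (G.chromaticNumber.toNat : ℝ) := by
  obtain ⟨a, b, hab⟩ := hedge
  have : Nonempty V := ⟨a⟩
  have halt : circAltitude G = G.chromaticNumber.toNat := by simp [← h]
  exact circChromNum_le_chromaticNumber.antisymm (halt ▸ circAltitude_le_circChromNum hab)
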